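/- If a is a nonincreasing nonnegative integer list, a' is a graphic list (i.e., it is the degree sequence of some simple graph), and a ≺ a', then a is also graphic. -/

import Mathlib

open Finset

/-- Partial sum of the first `k` entries of `a`. -/
def partSum {n : ℕ} (a : Fin n → ℕ) (k : ℕ) : ℕ :=
  ∑ i : Fin n, if (i : ℕ) < k then a i else 0

/-- `a ≺ a'` : `a` is majorized by `a'`. -/
def Majorized {n : ℕ} (a a' : Fin n → ℕ) : Prop :=
  (∀ k : ℕ, partSum a k ≤ partSum a' k) ∧ ∑ i, a i = ∑ i, a' i

/-- `a` is nonincreasing. -/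
def Nonincreasing {n : ℕ} (a : Fin n → ℕ) : Prop :=
  ∀ i j : Fin n, i ≤ j → a j ≤ a i

/-- `b` is nondecreasing. -/
def Nondecreasing {n : ℕ} (b : Fin n → ℕ) : Prop :=
  ∀ i j : Fin n, i ≤ j → b i ≤ b j

/-- `a` is obtained from `a'` by a unit `(i,j)`-transfer. -/
def UnitTransfer {n : ℕ} (a' a : Fin n → ℕ) (i j : Fin n) : Prop :=
  i < j ∧ a' j + 2 ≤ a' i ∧
  a = Function.update (Function.update a' i (a' i - 1)) j (a' j + 1)

/-- Row sum of a 0-1 matrix. -/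
def rowSum {n : ℕ} (M : Fin n → Fin n → Bool) (i : Fin n) : ℕ :=
  ∑ j, if M i j then 1 else 0

/-- Column sum of a 0-1 matrix. -/
def colSum {n : ℕ} (M : Fin n → Fin n → Bool) (j : Fin n) : ℕ :=
  ∑ i, if M i j then 1 else 0

/-- Number of loop-digraph realizations of `(a,b)`:
`n×n` 0-1 matrices with row sums `b` and column sums `a`. -/
noncomputable def N1 {n : ℕ} (a b : Fin n → ℕ) : ℕ :=
  Nat.card {M : Fin n → Fin n → Bool //
    (∀ i, rowSum M i = b i) ∧ (∀ j, colSum M j = a j)}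

def LoopDigraphic {n : ℕ} (a b : Fin n → ℕ) : Prop := 0 < N1 a b

/-- Number of digraph realizations of `(a,b)`:
`n×n` 0-1 matrices with zero diagonal, row sums `b` and column sums `a`. -/
noncomputable def N2 {n : ℕ} (a b : Fin n → ℕ) : ℕ :=
  Nat.card {M : Fin n → Fin n → Bool //
    (∀ i, M i i = false) ∧ (∀ i, rowSum M i = b i) ∧ (∀ j, colSum M j = a j)}

def Digraphic {n : ℕ} (a b : Fin n → ℕ) : Prop := 0 < N2 a b

/-- Number of simple graph realizations of `a` (symmetric 0-1 adjacency matrices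
with zero diagonal and degrees `a`). -/
noncomputable def N3 {n : ℕ} (a : Fin n → ℕ) : ℕ :=
  Nat.card {M : Fin n → Fin n → Bool //
    (∀ i j, M i j = M j i) ∧ (∀ i, M i i = false) ∧ (∀ i, rowSum M i = a i)}

def Graphic {n : ℕ} (a : Fin n → ℕ) : Prop := 0 < N3 a

/-- The minconvex list for parameters `n, m`. -/
def minconvex (n m : ℕ) : Fin n → ℕ :=
  fun i => if (i : ℕ) < m % n then m / n + 1 else m / n

/-- `(a,b)` is lexicographically nonincreasing. -/
def LexNonincreasing {n : ℕ} (a b : Fin n → ℕ) : Prop :=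
  ∀ i j : Fin n, i ≤ j → (a j < a i ∨ (a i = a j ∧ b j ≤ b i))

/-! If `a ≠ a'`, let `i` be the first index where they differ and `j` the first index after `i`
with `a' j < a j`. Majorization forces `a i < a' i`, and since `a` is nonincreasing,
`a' i > a i ≥ a j > a' j`. Moving one unit from entry `i` to entry `j` of `a'` keeps `a`
majorized and strictly decreases `∑ₖ partSum a' k`, so induction applies once the move is shown to
preserve graphicity: as `deg i ≥ deg j + 2`, some neighbour `k ≠ j` of `i` is not adjacent to `j`,
and replacing the edge `ik` by `jk` realizes the new list. -/

open Function

variable {n : ℕ}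

lemma graphic_iff_exists {a : Fin n → ℕ} : Graphic a ↔
    ∃ M : Fin n → Fin n → Bool,
      (∀ i j, M i j = M j i) ∧ (∀ i, M i i = false) ∧ (∀ i, rowSum M i = a i) := by
  rw [Graphic, N3, Nat.card_pos_iff, nonempty_subtype]
  exact and_iff_left inferInstance

def neighbors (M : Fin n → Fin n → Bool) (x : Fin n) : Finset (Fin n) := {y | M x y}

@[simp]
lemma mem_neighbors {M : Fin n → Fin n → Bool} {x y : Fin n} : y ∈ neighbors M x ↔ M x y := by
  simp [neighbors]

lemma rowSum_eq_card_neighbors (M : Fin n → Fin n → Bool) (x : Fin n) :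
    rowSum M x = #(neighbors M x) :=
  (card_filter _ _).symm

def moveEdge (M : Fin n → Fin n → Bool) (i j k : Fin n) : Fin n → Fin n → Bool :=
  fun x y => if s(x, y) = s(i, k) then false else if s(x, y) = s(j, k) then true else M x y

section moveEdge

variable {M : Fin n → Fin n → Bool} {i j k : Fin n}

lemma moveEdge_symm (hM : ∀ x y, M x y = M y x) (x y : Fin n) :
    moveEdge M i j k x y = moveEdge M i j k y x := by
  simp only [moveEdge, Sym2.eq_swap (a := y), hM x y]

lemma moveEdge_self (hM : ∀ x, M x x = false) (hjk : j ≠ k) (x : Fin n) :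
    moveEdge M i j k x x = false := by
  simp only [moveEdge, Sym2.eq_iff]
  grind

lemma neighbors_moveEdge_source (hij : i ≠ j) (hik : i ≠ k) :
    neighbors (moveEdge M i j k) i = (neighbors M i).erase k := by
  ext y; simp only [moveEdge, Sym2.eq_iff, mem_neighbors, mem_erase]; grind

lemma neighbors_moveEdge_target (hij : i ≠ j) (hjk : j ≠ k) :
    neighbors (moveEdge M i j k) j = insert k (neighbors M j) := by
  ext y; simp only [moveEdge, Sym2.eq_iff, mem_neighbors, mem_insert]; grind

lemma neighbors_moveEdge_pivot (hij : i ≠ j) (hik : i ≠ k) (hjk : j ≠ k) :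
    neighbors (moveEdge M i j k) k = insert j ((neighbors M k).erase i) := by
  ext y; simp only [moveEdge, Sym2.eq_iff, mem_neighbors, mem_insert, mem_erase]; grind

lemma neighbors_moveEdge_of_ne {x : Fin n} (hxi : x ≠ i) (hxj : x ≠ j) (hxk : x ≠ k) :
    neighbors (moveEdge M i j k) x = neighbors M x := by
  ext y; simp only [moveEdge, Sym2.eq_iff, mem_neighbors]; grind

end moveEdge

lemma exists_mem_neighbors_notMem_neighbors {M : Fin n → Fin n → Bool} {i j : Fin n}
    (hdeg : #(neighbors M j) + 2 ≤ #(neighbors M i)) :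
    ∃ k ∈ neighbors M i, k ≠ j ∧ k ∉ neighbors M j := by
  have := pred_card_le_card_erase (s := neighbors M i) (a := j)
  obtain ⟨k, hk, hkj⟩ := exists_mem_notMem_of_card_lt_card (s := neighbors M j)
    (t := (neighbors M i).erase j) (by omega)
  exact ⟨k, mem_of_mem_erase hk, ne_of_mem_erase hk, hkj⟩

theorem Graphic.transfer {a : Fin n → ℕ} {i j : Fin n} (hg : Graphic a) (hij : i ≠ j)
    (hdeg : a j + 2 ≤ a i) : Graphic (update (update a i (a i - 1)) j (a j + 1)) := by
  obtain ⟨M, hsym, hloop, hrow⟩ := graphic_iff_exists.mp hg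
  simp only [rowSum_eq_card_neighbors] at hrow
  obtain ⟨k, hik, hkj, hjk⟩ := exists_mem_neighbors_notMem_neighbors (M := M) (i := i) (j := j)
    (by rwa [hrow, hrow])
  have hki : k ≠ i := by rintro rfl; simp [hloop] at hik
  have hki' : i ∈ neighbors M k := by simpa [hsym k] using hik
  have hkj' : j ∉ neighbors M k := by simpa [hsym k] using hjk
  refine graphic_iff_exists.mpr ⟨moveEdge M i j k, moveEdge_symm hsym, moveEdge_self hloop hkj.symm,
    fun x => ?_⟩
  rw [rowSum_eq_card_neighbors]
  rcases eq_or_ne x i with rfl | hxi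
  · rw [neighbors_moveEdge_source hij hki.symm, card_erase_of_mem hik, hrow, update_of_ne hij,
      update_self]
  rcases eq_or_ne x j with rfl | hxj
  · rw [neighbors_moveEdge_target hij hkj.symm, card_insert_of_notMem hjk, hrow, update_self]
  rcases eq_or_ne x k with rfl | hxk
  · have := card_pos.mpr ⟨i, hki'⟩
    rw [neighbors_moveEdge_pivot hij hki.symm hkj.symm, card_insert_of_notMem (by simp [hkj']),
      card_erase_of_mem hki', update_of_ne hkj, update_of_ne hki, ← hrow]
    omega
  · rw [neighbors_moveEdge_of_ne hxi hxj hxk, update_of_ne hxj, update_of_ne hxi, hrow]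

lemma partSum_update (f : Fin n → ℕ) (i : Fin n) (b k : ℕ) :
    partSum (update f i b) k + (if (i : ℕ) < k then f i else 0)
      = partSum f k + (if (i : ℕ) < k then b else 0) := by
  simp only [partSum]
  rw [← add_sum_erase _ _ (mem_univ i), ← add_sum_erase _ _ (mem_univ i),
    sum_congr rfl fun t ht => by rw [update_of_ne (ne_of_mem_erase ht)], update_self]
  split_ifs <;> omega

lemma partSum_top (f : Fin n → ℕ) : partSum f n = ∑ i, f i :=
  sum_congr rfl fun t _ => if_pos t.is_lt

lemma partSum_succ (f : Fin n → ℕ) (i : Fin n) : partSum f (i + 1) = partSum f i + f i := by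
  simp only [partSum]
  rw [← add_sum_erase _ _ (mem_univ i), ← add_sum_erase _ _ (mem_univ i),
    sum_congr rfl fun t ht => ?_]
  · simp only [lt_add_one, if_true, lt_irrefl, if_false]; ring
  · have := Fin.val_ne_of_ne (ne_of_mem_erase ht)
    simp only [Nat.lt_succ_iff_lt_or_eq, this, or_false]

lemma partSum_congr {f g : Fin n → ℕ} {k : ℕ} (h : ∀ t : Fin n, (t : ℕ) < k → f t = g t) :
    partSum f k = partSum g k :=
  sum_congr rfl fun t _ => by split_ifs with ht; exacts [h t ht, rfl]

lemma partSum_lt_partSum {f g : Fin n → ℕ} {k : ℕ} (hle : ∀ t : Fin n, (t : ℕ) < k → f t ≤ g t)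
    (hlt : ∃ t : Fin n, (t : ℕ) < k ∧ f t < g t) : partSum f k < partSum g k := by
  obtain ⟨t, htk, ht⟩ := hlt
  refine sum_lt_sum (fun s _ => ?_) ⟨t, mem_univ t, by simpa [htk]⟩
  split_ifs with hs
  exacts [hle s hs, le_rfl]

def sumPartSums (a : Fin n → ℕ) : ℕ := ∑ k ∈ range (n + 1), partSum a k

namespace UnitTransfer

variable {a' a : Fin n → ℕ} {i j : Fin n}

lemma partSum_add (h : UnitTransfer a' a i j) (k : ℕ) :
    partSum a k + (if (i : ℕ) < k then 1 else 0)
      = partSum a' k + (if (j : ℕ) < k then 1 else 0) := by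
  obtain ⟨hij, hdeg, rfl⟩ := h
  have hj := partSum_update (update a' i (a' i - 1)) j (a' j + 1) k
  have hi := partSum_update a' i (a' i - 1) k
  rw [update_of_ne hij.ne'] at hj
  split_ifs at hi hj ⊢ <;> omega

lemma sum_eq (h : UnitTransfer a' a i j) : ∑ t, a t = ∑ t, a' t := by
  have := h.partSum_add n
  rw [partSum_top, partSum_top, if_pos i.is_lt, if_pos j.is_lt] at this
  omega

lemma sumPartSums_lt (h : UnitTransfer a' a i j) : sumPartSums a < sumPartSums a' := by
  refine sum_lt_sum (fun k _ => ?_) ⟨j, mem_range.mpr (by omega), ?_⟩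
  · have hk := h.partSum_add k
    have hij : (i : ℕ) < j := h.1
    split_ifs at hk <;> omega
  · have hj := h.partSum_add j
    rw [if_pos (show (i : ℕ) < j from h.1), if_neg (lt_irrefl _)] at hj
    omega

lemma majorized {b : Fin n → ℕ} (h : UnitTransfer a' a i j) (hmaj : Majorized b a')
    (hstrict : ∀ k : ℕ, (i : ℕ) < k → k ≤ j → partSum b k < partSum a' k) : Majorized b a := by
  refine ⟨fun k => ?_, hmaj.2.trans h.sum_eq.symm⟩
  have := h.partSum_add k
  have := hmaj.1 k
  by_cases hik : (i : ℕ) < k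
  · by_cases hkj : k ≤ j
    · have := hstrict k hik hkj
      split_ifs at * <;> omega
    · split_ifs at * <;> omega
  · split_ifs at * <;> omega

end UnitTransfer

theorem Majorized.exists_unitTransfer {a a' : Fin n → ℕ} (hmono : Nonincreasing a)
    (hmaj : Majorized a a') (hne : a ≠ a') :
    ∃ a'' i j, UnitTransfer a' a'' i j ∧ Majorized a a'' := by
  obtain ⟨i, hi, hi_min⟩ := wellFounded_lt.has_min {t | a t ≠ a' t} (Function.ne_iff.mp hne)
  have hpre : ∀ t : Fin n, t < i → a t = a' t := fun t ht => by
    by_contra h; exact hi_min t h ht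
  have hlt_i : a i < a' i := by
    have h := hmaj.1 (i + 1)
    rw [partSum_succ, partSum_succ, partSum_congr fun t ht => hpre t ht] at h
    exact lt_of_le_of_ne (by omega) hi
  have hex : ∃ t, i < t ∧ a' t < a t := by
    by_contra! h
    have hlt := partSum_lt_partSum (k := n) (fun t _ => ?_) ⟨i, i.is_lt, hlt_i⟩
    · rw [partSum_top, partSum_top, hmaj.2] at hlt
      exact lt_irrefl _ hlt
    rcases lt_trichotomy t i with ht | rfl | ht
    exacts [(hpre t ht).le, hlt_i.le, h t ht]
  obtain ⟨j, ⟨hij, hj⟩, hj_min⟩ := wellFounded_lt.has_min {t | i < t ∧ a' t < a t} hex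
  have hle : ∀ t : Fin n, t < j → a t ≤ a' t := fun t htj => by
    rcases lt_trichotomy t i with ht | rfl | ht
    · exact (hpre t ht).le
    · exact hlt_i.le
    · by_contra! h; exact hj_min t ⟨ht, h⟩ htj
  have hdeg : a' j + 2 ≤ a' i := by
    have := hmono i j hij.le
    omega
  have ht : UnitTransfer a' _ i j := ⟨hij, hdeg, rfl⟩
  refine ⟨_, i, j, ht, ht.majorized hmaj fun k hik hkj => ?_⟩
  exact partSum_lt_partSum (fun t htk => hle t (by omega)) ⟨i, hik, hlt_i⟩

theorem stmt2 {n : ℕ} (a a' : Fin n → ℕ)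
    (hmono : Nonincreasing a) (hg : Graphic a') (hmaj : Majorized a a') :
    Graphic a := by
  induction hs : sumPartSums a' using Nat.strong_induction_on generalizing a' with
  | _ s ih =>
    by_cases hne : a = a'
    · exact hne ▸ hg
    obtain ⟨a'', i, j, ht, hmaj''⟩ := hmaj.exists_unitTransfer hmono hne
    obtain ⟨hij, hdeg, rfl⟩ := id ht
    exact ih _ (hs ▸ ht.sumPartSums_lt) _ (hg.transfer hij.ne hdeg) hmaj'' rfl
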